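/- arXiv:2411.10320 — 7 statements merged into one kernel-verified Lean document; each statement's English description precedes it below -/
import Mathlib

section
/- Let r < 0 and set a := √(−r). Suppose x : ℝ → ℝ is differentiable and satisfies x′(t) = r + x(t)² for all t ≥ 0, and x(0) < a. Then x(t) → −a as t → +∞; that is, the equilibrium −√(−r) of the canonical saddle-node ODE attracts every forward-global solution starting below √(−r). -/
/-!
With `a = √(-r)` the equation reads `x' = (x - a)(x + a)`, which is linear in `x - a` and in `x + a`:
`x t - a = (x 0 - a) exp (∫₀ᵗ (x + a))` and `x t + a = (x 0 + a) exp (∫₀ᵗ (x - a))`.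
The first keeps `x < a`, so the exponential factor in the second is at most `1`; this traps `x`
below `max (x 0) (-a) < a`. Hence `x - a ≤ -κ` for some `κ > 0`, the factor is at most `exp (-κ t)`,
and `x t + a → 0`.
-/

open Filter Set Topology

theorem eq_mul_exp_integral_of_deriv_eq_mul {y c : ℝ → ℝ} (hy : Differentiable ℝ y)
    (hc : Continuous c) (h : ∀ t, 0 ≤ t → deriv y t = c t * y t) {t : ℝ} (ht : 0 ≤ t) :
    y t = y 0 * Real.exp (∫ s in (0 : ℝ)..t, c s) := by
  set F : ℝ → ℝ := fun u => ∫ s in (0 : ℝ)..u, c s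
  have hF : ∀ u, HasDerivAt F (c u) u := fun u => (hc.integral_hasStrictDerivAt 0 u).hasDerivAt
  have hg : ∀ u, HasDerivAt (fun v => y v * Real.exp (-F v))
      (deriv y u * Real.exp (-F u) + y u * (Real.exp (-F u) * -c u)) u :=
    fun u => (hy u).hasDerivAt.mul (hF u).neg.exp
  have hg_zero : ∀ u ∈ Ico 0 t, HasDerivWithinAt (fun v => y v * Real.exp (-F v)) 0 (Ici u) u := by
    intro u hu
    have hzero : deriv y u * Real.exp (-F u) + y u * (Real.exp (-F u) * -c u) = 0 := by
      rw [h u hu.1]; ring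
    exact hzero ▸ (hg u).hasDerivWithinAt
  have hconst := constant_of_has_deriv_right_zero
    (fun u _ => (hg u).continuousAt.continuousWithinAt) hg_zero t ⟨ht, le_rfl⟩
  have hF0 : F 0 = 0 := intervalIntegral.integral_same
  rw [hF0, neg_zero, Real.exp_zero, mul_one] at hconst
  rw [← hconst, mul_assoc, ← Real.exp_add, neg_add_cancel, Real.exp_zero, mul_one]

theorem intervalIntegral.integral_le_mul_of_le {f : ℝ → ℝ} {a b C : ℝ} (hab : a ≤ b)
    (hf : IntervalIntegrable f MeasureTheory.volume a b) (h : ∀ s ∈ Icc a b, f s ≤ C) :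
    ∫ s in a..b, f s ≤ C * (b - a) := by
  simpa [mul_comm] using intervalIntegral.integral_mono_on hab hf intervalIntegrable_const h

theorem sub_eq_mul_exp_integral_of_deriv_eq_sq_sub_sq {a : ℝ} {x : ℝ → ℝ}
    (hx : Differentiable ℝ x) (hode : ∀ t, 0 ≤ t → deriv x t = x t ^ 2 - a ^ 2)
    {t : ℝ} (ht : 0 ≤ t) :
    x t - a = (x 0 - a) * Real.exp (∫ s in (0 : ℝ)..t, (x s + a)) :=
  eq_mul_exp_integral_of_deriv_eq_mul (c := fun s => x s + a) (hx.sub_const a)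
    (hx.continuous.add continuous_const) (fun t ht => by rw [deriv_sub_const, hode t ht]; ring) ht

theorem tendsto_neg_of_deriv_eq_sq_sub_sq {a : ℝ} (ha : 0 < a) {x : ℝ → ℝ}
    (hx : Differentiable ℝ x) (hode : ∀ t, 0 ≤ t → deriv x t = x t ^ 2 - a ^ 2) (h0 : x 0 < a) :
    Tendsto x atTop (𝓝 (-a)) := by
  set I : ℝ → ℝ := fun t => ∫ s in (0 : ℝ)..t, (x s - a)
  have hI_le : ∀ {t C : ℝ}, 0 ≤ t → (∀ s ∈ Icc 0 t, x s - a ≤ C) → I t ≤ C * t := fun ht h => by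
    simpa using intervalIntegral.integral_le_mul_of_le ht
      ((hx.continuous.sub continuous_const).intervalIntegrable _ _) h
  have hbelow : ∀ t, 0 ≤ t → x t < a := fun t ht => by
    have := sub_eq_mul_exp_integral_of_deriv_eq_sq_sub_sq hx hode ht
    linarith [mul_neg_of_neg_of_pos (sub_neg.2 h0) (Real.exp_pos (∫ s in (0 : ℝ)..t, (x s + a)))]
  have hplus : ∀ t, 0 ≤ t → x t + a = (x 0 + a) * Real.exp (I t) := fun t ht => by
    simpa [← sub_eq_add_neg] using
      sub_eq_mul_exp_integral_of_deriv_eq_sq_sub_sq (a := -a) hx (by simpa using hode) ht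
  have hexp_le_one : ∀ t, 0 ≤ t → Real.exp (I t) ≤ 1 := fun t ht =>
    Real.exp_le_one_iff.2 <| by simpa using hI_le ht fun s hs => (sub_neg.2 (hbelow s hs.1)).le
  have htrap : ∀ t, 0 ≤ t → x t ≤ max (x 0) (-a) := fun t ht => by
    have hxt : x t = -a + (x 0 + a) * Real.exp (I t) := by linarith [hplus t ht]
    rcases le_total 0 (x 0 + a) with hpos | hneg
    · have := mul_le_of_le_one_right hpos (hexp_le_one t ht)
      exact le_max_of_le_left (by linarith)
    · have := mul_nonpos_of_nonpos_of_nonneg hneg (Real.exp_pos (I t)).le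
      exact le_max_of_le_right (by linarith)
  have hgap : 0 < a - max (x 0) (-a) := sub_pos.2 (max_lt h0 (by linarith))
  have hI : Tendsto I atTop atBot := by
    refine tendsto_atBot_mono' _ ?_ (tendsto_id.const_mul_atTop_of_neg (neg_lt_zero.2 hgap))
    filter_upwards [eventually_ge_atTop 0] with t ht
    exact hI_le ht fun s hs => by linarith [htrap s hs.1]
  have hlim : Tendsto (fun t => -a + (x 0 + a) * Real.exp (I t)) atTop (𝓝 (-a)) := by
    simpa using ((Real.tendsto_exp_atBot.comp hI).const_mul (x 0 + a)).const_add (-a)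
  refine hlim.congr' ?_
  filter_upwards [eventually_ge_atTop 0] with t ht
  linarith [hplus t ht]

/-- For the canonical saddle-node ODE `x' = r + x²` with `r < 0`, every forward-global
solution starting below `√(-r)` converges to the stable equilibrium `-√(-r)` as `t → +∞`. -/
theorem stmt_0 (r : ℝ) (hr : r < 0) (x : ℝ → ℝ)
    (hx : Differentiable ℝ x)
    (hode : ∀ t : ℝ, 0 ≤ t → deriv x t = r + x t ^ 2)
    (hinit : x 0 < Real.sqrt (-r)) :
    Filter.Tendsto x Filter.atTop (nhds (-Real.sqrt (-r))) := by
  have hsq : Real.sqrt (-r) ^ 2 = -r := Real.sq_sqrt (by linarith)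
  refine tendsto_neg_of_deriv_eq_sq_sub_sq (Real.sqrt_pos.2 (by linarith)) hx
    (fun t ht => ?_) hinit
  rw [hode t ht, hsq]
  ring
end

section
/- Let r > 0 and let a < b be real numbers. If x : (a,b) → ℝ is differentiable with x′(t) = r + x(t)² for all t ∈ (a,b), then b − a ≤ π/√r. In particular, every solution of the ODE for r > 0 blows up in finite time, and the total transition time from −∞ to +∞ is at most π/√r. -/
/-- For `r > 0`, any solution of the canonical saddle-node ODE `x' = r + x²` defined on an
open interval `(a, b)` forces `b - a ≤ π/√r`: every solution blows up in finite time, and the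
total transition time from `-∞` to `+∞` is at most `π/√r`. -/
theorem stmt_2 (r : ℝ) (hr : 0 < r) (a b : ℝ) (hab : a < b) (x : ℝ → ℝ)
    (hode : ∀ t ∈ Set.Ioo a b, HasDerivAt x (r + x t ^ 2) t) :
    b - a ≤ Real.pi / Real.sqrt r := by
  set s := Real.sqrt r with hs_def
  have hs : 0 < s := Real.sqrt_pos.mpr hr
  have hs2 : s ^ 2 = r := Real.sq_sqrt hr.le
  set θ : ℝ → ℝ := fun t => Real.arctan (x t / s) with hθ
  have hθd : ∀ t ∈ Set.Ioo a b, HasDerivAt θ s t := by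
    intro t ht
    have h1 : HasDerivAt (fun t => x t / s) ((r + x t ^ 2) / s) t :=
      (hode t ht).div_const s
    have h2 := h1.arctan
    convert h2 using 1
    have hpos : 0 < r + x t ^ 2 := by positivity
    have hxs : (1 : ℝ) + (x t / s) ^ 2 = (r + x t ^ 2) / r := by
      field_simp
      nlinarith [hs2]
    rw [hxs]
    field_simp
    nlinarith [hs2]
  have key : ∀ t1 t2, a < t1 → t1 < t2 → t2 < b → s * (t2 - t1) < Real.pi := by
    intro t1 t2 h1 h12 h2
    have hsub : Set.Icc t1 t2 ⊆ Set.Ioo a b := fun u hu =>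
      ⟨lt_of_lt_of_le h1 hu.1, lt_of_le_of_lt hu.2 h2⟩
    have hcont : ContinuousOn θ (Set.Icc t1 t2) := fun u hu =>
      ((hθd u (hsub hu)).continuousAt).continuousWithinAt
    obtain ⟨c, hc, hceq⟩ := exists_hasDerivAt_eq_slope θ (fun _ => s) h12 hcont
      (fun u hu => hθd u (hsub (Set.mem_Icc_of_Ioo hu)))
    have ht12 : (0:ℝ) < t2 - t1 := by linarith
    have heq : s * (t2 - t1) = θ t2 - θ t1 := by
      rw [hceq]
      field_simp
    have hb1 := Real.arctan_lt_pi_div_two (x t2 / s)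
    have hb2 := Real.neg_pi_div_two_lt_arctan (x t1 / s)
    simp only [hθ] at heq
    linarith
  by_contra h
  push_neg at h
  set δ := (b - a - Real.pi / s) / 4 with hδ
  have hδpos : 0 < δ := by
    have : Real.pi / s < b - a := h
    simp only [hδ]; linarith
  have hk := key (a + δ) (b - δ) (by linarith) (by
    have : Real.pi / s > 0 := div_pos Real.pi_pos hs
    simp only [hδ]; linarith) (by linarith)
  have hps : s * (Real.pi / s) = Real.pi := by field_simp
  have hexp : s * (b - δ - (a + δ)) = Real.pi + 2 * s * δ := by
    have : b - δ - (a + δ) = (Real.pi / s) + 2 * δ := by simp only [hδ]; ring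
    rw [this]; rw [mul_add, hps]; ring
  nlinarith [hk, hexp, mul_pos hs hδpos]
end

section
/- Fix ρ ∈ ℝ with ρ ≠ 1. The derivative of the cost function satisfies (J_ρ²)′(x) = (f_ρ(x) − x)(f_ρ′(x) − 1) for all x ∈ ℝ, and f_ρ′(x) = 1 holds exactly for x ∈ {x₋, x₊}. Consequently, the set of critical points of J_ρ² is exactly the union of the fixed-point set {x : f_ρ(x) = x} with the two parameter-independent points {x₋, x₊} = {(9 − √33)/24, (9 + √33)/24}. -/
/-- The one-parameter family of polynomial maps `f_ρ`. -/
noncomputable def fmap (ρ x : ℝ) : ℝ :=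
  (ρ - 1) * (8 * x ^ 3 - 9 * x ^ 2) + 2 * ρ * x - x + ρ

/-- The cost function `J_ρ²(x) = (1/2)(f_ρ(x) - x)²`. -/
noncomputable def Jsq (ρ x : ℝ) : ℝ := (1 / 2) * (fmap ρ x - x) ^ 2

/-! By the chain rule `J_ρ²' = (f_ρ - id)(f_ρ' - 1)`. Moreover `f_ρ' - 1 = (ρ - 1)(24x² - 18x + 2)`,
and the quadratic factor, which does not involve `ρ`, has the roots `(9 ∓ √33)/24`. -/

theorem HasDerivAt.half_sq_sub_id {g : ℝ → ℝ} {g' x : ℝ} (hg : HasDerivAt g g' x) :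
    HasDerivAt (fun y => (1 / 2) * (g y - y) ^ 2) ((g x - x) * (g' - 1)) x :=
  (((hg.fun_sub (hasDerivAt_id' x)).fun_pow 2).const_mul (1 / 2)).congr_deriv (by push_cast; ring)

theorem hasDerivAt_fmap (ρ x : ℝ) :
    HasDerivAt (fmap ρ) ((ρ - 1) * (24 * x ^ 2 - 18 * x) + 2 * ρ - 1) x := by
  have hcubic := ((hasDerivAt_pow 3 x).const_mul 8).fun_sub ((hasDerivAt_pow 2 x).const_mul 9)
  exact ((((hcubic.const_mul (ρ - 1)).fun_add ((hasDerivAt_id' x).const_mul (2 * ρ))).fun_sub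
    (hasDerivAt_id' x)).add_const ρ).congr_deriv (by push_cast; ring)

theorem deriv_Jsq (ρ x : ℝ) :
    deriv (Jsq ρ) x = (fmap ρ x - x) * (deriv (fmap ρ) x - 1) := by
  rw [(hasDerivAt_fmap ρ x).deriv]
  exact (hasDerivAt_fmap ρ x).half_sq_sub_id.deriv

theorem deriv_fmap_sub_one (ρ x : ℝ) :
    deriv (fmap ρ) x - 1 =
      24 * (ρ - 1) * ((x - (9 - √33) / 24) * (x - (9 + √33) / 24)) := by
  have hsqrt : √33 ^ 2 = 33 := Real.sq_sqrt (by norm_num)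
  rw [(hasDerivAt_fmap ρ x).deriv]
  linear_combination (ρ - 1) / 24 * hsqrt

theorem deriv_fmap_eq_one_iff {ρ : ℝ} (hρ : ρ ≠ 1) (x : ℝ) :
    deriv (fmap ρ) x = 1 ↔ x = (9 - √33) / 24 ∨ x = (9 + √33) / 24 := by
  have hρ' : 24 * (ρ - 1) ≠ 0 := mul_ne_zero (by norm_num) (sub_ne_zero.2 hρ)
  rw [← sub_eq_zero, deriv_fmap_sub_one, mul_eq_zero, or_iff_right hρ', mul_eq_zero, sub_eq_zero,
    sub_eq_zero]

/-- For `ρ ≠ 1`: the derivative of the cost function is `(f_ρ(x) - x)(f_ρ'(x) - 1)`,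
`f_ρ'(x) = 1` holds exactly at the two parameter-independent points `(9 ∓ √33)/24`, and the
critical points of `J_ρ²` are exactly the fixed points of `f_ρ` together with those two points. -/
theorem stmt_5 (ρ : ℝ) (hρ : ρ ≠ 1) :
    (∀ x : ℝ, deriv (Jsq ρ) x = (fmap ρ x - x) * (deriv (fmap ρ) x - 1)) ∧
    ({x : ℝ | deriv (fmap ρ) x = 1} =
      {(9 - Real.sqrt 33) / 24, (9 + Real.sqrt 33) / 24}) ∧
    ({x : ℝ | deriv (Jsq ρ) x = 0} =
      {x : ℝ | fmap ρ x = x} ∪ {(9 - Real.sqrt 33) / 24, (9 + Real.sqrt 33) / 24}) := by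
  have hcrit : {x : ℝ | deriv (fmap ρ) x = 1} = {(9 - √33) / 24, (9 + √33) / 24} := by
    ext x
    exact deriv_fmap_eq_one_iff hρ x
  refine ⟨deriv_Jsq ρ, hcrit, ?_⟩
  rw [← hcrit]
  ext x
  simp only [Set.mem_ofPred_eq, Set.mem_union, deriv_Jsq, mul_eq_zero, sub_eq_zero]
end

section
/- For every ρ with 0 < ρ < ρ*, the map f_ρ has exactly three real fixed points, i.e. the set {x ∈ ℝ : f_ρ(x) = x} has exactly three elements. -/
/-- The critical parameter value of the saddle-node bifurcation. -/
noncomputable def ρstar : ℝ := (33 * Real.sqrt 33 - 115) / 668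

open Polynomial in
/-- The fixed-point polynomial `f_ρ(x) - x`. -/
noncomputable def Pfix (ρ : ℝ) : Polynomial ℝ :=
  C (8 * (ρ - 1)) * X ^ 3 + C (9 * (1 - ρ)) * X ^ 2 + C (2 * (ρ - 1)) * X + C ρ

/-- For `0 < ρ < ρ*`, the map `f_ρ` has exactly three real fixed points. -/
theorem stmt_7 (ρ : ℝ) (h0 : 0 < ρ) (h1 : ρ < ρstar) :
    {x : ℝ | fmap ρ x = x}.ncard = 3 := by
  set s : ℝ := Real.sqrt 33 with hs_def
  have hs2 : s ^ 2 = 33 := Real.sq_sqrt (by norm_num)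
  have hs5 : 5 < s := by
    nlinarith [Real.sqrt_nonneg (33:ℝ), hs2]
  have hs6 : s < 6 := by
    nlinarith [Real.sqrt_nonneg (33:ℝ), hs2]
  have hρstar : ρstar = (33 * s - 115) / 668 := rfl
  have h1' : 668 * ρ < 33 * s - 115 := by
    rw [hρstar, lt_div_iff₀ (by norm_num : (0:ℝ) < 668)] at h1; linarith
  have hρ1 : ρ < 1 / 4 := by nlinarith
  -- the auxiliary cubic g and the level c
  set g : ℝ → ℝ := fun x => 8 * x ^ 3 - 9 * x ^ 2 + 2 * x with hg_def
  have hgcont : Continuous g := by fun_prop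
  set c : ℝ := ρ / (1 - ρ) with hc_def
  have h1ρ : (0:ℝ) < 1 - ρ := by linarith
  have hc0 : 0 < c := div_pos h0 h1ρ
  -- x₋ and the critical value
  set xm : ℝ := (9 - s) / 24 with hxm_def
  have hxm0 : 0 < xm := by rw [hxm_def]; nlinarith
  have hxmh : xm < 1 / 2 := by rw [hxm_def]; nlinarith
  have hgxm : g xm = (11 * s - 27) / 288 := by
    show 8 * ((9 - s) / 24) ^ 3 - 9 * ((9 - s) / 24) ^ 2 + 2 * ((9 - s) / 24)
      = (11 * s - 27) / 288
    linear_combination (-s / 1728) * hs2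
  have hkey : ρ * (261 + 11 * s) < 11 * s - 27 := by
    nlinarith [mul_lt_mul_of_pos_right h1' (by nlinarith : (0:ℝ) < 261 + 11 * s)]
  have hcxm : c < g xm := by
    rw [hgxm, hc_def, div_lt_div_iff₀ h1ρ (by norm_num)]
    nlinarith
  have hc1 : c ≤ 1 := by
    rw [hc_def, div_le_one h1ρ]; nlinarith
  -- three roots of g x = c via IVT
  have hg0 : g 0 = 0 := by simp [hg_def]
  have hgh : g (1/2) = -(1/4) := by norm_num [hg_def]
  have hg1 : g 1 = 1 := by norm_num [hg_def]
  obtain ⟨a, ha, hga⟩ := intermediate_value_Icc hxm0.le hgcont.continuousOn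
    (by rw [hg0]; exact ⟨hc0.le, hcxm.le⟩ : c ∈ Set.Icc (g 0) (g xm))
  obtain ⟨b, hb, hgb⟩ := intermediate_value_Icc' hxmh.le hgcont.continuousOn
    (by rw [hgh]; exact ⟨by linarith, hcxm.le⟩ : c ∈ Set.Icc (g (1/2)) (g xm))
  obtain ⟨d, hd, hgd⟩ := intermediate_value_Icc (by norm_num : (1:ℝ)/2 ≤ 1)
    hgcont.continuousOn (by rw [hgh, hg1]; exact ⟨by linarith, hc1⟩)
  have hab : a ≠ b := by
    intro h
    have hax : a = xm := le_antisymm ha.2 (h ▸ hb.1)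
    rw [hax] at hga
    rw [hga] at hcxm
    exact lt_irrefl c hcxm
  have hbd : b ≠ d := by
    intro h
    have : b = 1/2 := le_antisymm hb.2 (h ▸ hd.1)
    rw [this, hgh] at hgb
    linarith
  have had : a ≠ d := by
    intro h
    have := ha.2
    have := hd.1
    linarith [h ▸ ha.2]
  -- fixed points are exactly roots of g x = c
  have hfix : ∀ x : ℝ, fmap ρ x = x ↔ (1 - ρ) * g x = ρ := by
    intro x
    constructor <;> intro h
    · show (1 - ρ) * (8 * x ^ 3 - 9 * x ^ 2 + 2 * x) = ρ
      simp only [fmap] at h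
      linear_combination -h
    · have h' : (1 - ρ) * (8 * x ^ 3 - 9 * x ^ 2 + 2 * x) = ρ := h
      simp only [fmap]
      linear_combination -h'
  have hmem : ∀ y : ℝ, g y = c → fmap ρ y = y := by
    intro y hy
    rw [hfix y, hy, hc_def]
    field_simp
  -- the set as roots of the polynomial Pfix
  have hcoeff : (8 : ℝ) * (ρ - 1) ≠ 0 := by intro h; nlinarith
  have hdeg : (Pfix ρ).natDegree = 3 := by
    unfold Pfix; compute_degree!
    intro h; linarith
  have hP0 : Pfix ρ ≠ 0 := by
    intro h; rw [h] at hdeg; simp at hdeg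
  have hset : {x : ℝ | fmap ρ x = x} = ↑((Pfix ρ).roots.toFinset) := by
    ext x
    simp only [Set.mem_setOf_eq, Finset.coe_sort_coe, Multiset.mem_toFinset,
      Finset.mem_coe, Polynomial.mem_roots hP0, Polynomial.IsRoot.def]
    have heval : (Pfix ρ).eval x = fmap ρ x - x := by
      simp [Pfix, fmap]; ring
    rw [heval, sub_eq_zero]
  have hfin : {x : ℝ | fmap ρ x = x}.Finite := by
    rw [hset]; exact (Pfix ρ).roots.toFinset.finite_toSet
  have hle : {x : ℝ | fmap ρ x = x}.ncard ≤ 3 := by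
    rw [hset, Set.ncard_coe_finset]
    calc (Pfix ρ).roots.toFinset.card ≤ Multiset.card (Pfix ρ).roots :=
          Multiset.toFinset_card_le _
      _ ≤ (Pfix ρ).natDegree := (Pfix ρ).card_roots'
      _ = 3 := hdeg
  have hsub : ({a, b, d} : Set ℝ) ⊆ {x : ℝ | fmap ρ x = x} := by
    intro x hx
    simp only [Set.mem_insert_iff, Set.mem_singleton_iff] at hx
    rcases hx with h | h | h <;> subst h
    · exact hmem _ hga
    · exact hmem _ hgb
    · exact hmem _ hgd
  have hge : 3 ≤ {x : ℝ | fmap ρ x = x}.ncard := by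
    have h3 : ({a, b, d} : Set ℝ).ncard = 3 :=
      Set.ncard_eq_three.mpr ⟨a, b, d, hab, had, hbd, rfl⟩
    calc (3:ℕ) = ({a, b, d} : Set ℝ).ncard := h3.symm
      _ ≤ _ := Set.ncard_le_ncard hsub hfin
  omega
end

section
/- The extremum of the cost function at x₋ changes type across the saddle-node bifurcation: for every ρ with ρ* < ρ < 1, the point x₋ is a strict local minimum of J_ρ² with J_ρ²(x₋) > 0 (a ghost state), while for every ρ with 0 < ρ < ρ*, the point x₋ is a strict local maximum of J_ρ². -/
/-- The bifurcation point in state space. -/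
noncomputable def xminus : ℝ := (9 - Real.sqrt 33) / 24

private lemma s_sq : Real.sqrt 33 ^ 2 = 33 := Real.sq_sqrt (by norm_num)

private lemma s_pos : 0 < Real.sqrt 33 := Real.sqrt_pos.mpr (by norm_num)

/-- Factorization of the residual around the double root `x₋`. -/
private lemma key (ρ y : ℝ) :
    fmap ρ y - y = (fmap ρ xminus - xminus)
      + 8 * (1 - ρ) * (y - xminus) ^ 2 * ((9 + 2 * Real.sqrt 33) / 24 - y) := by
  have hs := s_sq
  unfold fmap xminus
  set s := Real.sqrt 33
  linear_combination (s * ρ / 576 - s / 576 - y / 24 + 1 / 64 + y * ρ / 24 - ρ / 64) * hs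

/-- Value of the residual at `x₋`. -/
private lemma hval (ρ : ℝ) :
    fmap ρ xminus - xminus = (783 + 33 * Real.sqrt 33) / 864 * (ρ - ρstar) := by
  have hs := s_sq
  unfold fmap xminus ρstar
  set s := Real.sqrt 33
  linear_combination (-(s * ρ) / 1728 + s / 1728 + 121 / 64128) * hs

/-- The extremum of the cost function at `x₋` changes type across the saddle-node bifurcation:
for `ρ* < ρ < 1` the point `x₋` is a strict local minimum of `J_ρ²` with positive value
(a ghost state), while for `0 < ρ < ρ*` it is a strict local maximum. -/
theorem stmt_9 (ρ : ℝ) :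
    (ρstar < ρ → ρ < 1 →
      (∀ᶠ y in nhdsWithin xminus {xminus}ᶜ, Jsq ρ xminus < Jsq ρ y) ∧
      0 < Jsq ρ xminus) ∧
    (0 < ρ → ρ < ρstar →
      ∀ᶠ y in nhdsWithin xminus {xminus}ᶜ, Jsq ρ y < Jsq ρ xminus) := by
  have hs := s_sq
  have hsp := s_pos
  set s := Real.sqrt 33 with hsdef
  -- the "roof" point r of the cubic factor
  have hr : xminus < (9 + 2 * s) / 24 := by
    unfold xminus; rw [← hsdef]; linarith
  have hIoo : ∀ᶠ y in nhds xminus, y ∈ Set.Ioo (xminus - 1) ((9 + 2 * s) / 24) :=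
    Filter.eventually_mem_set.mpr (Ioo_mem_nhds (by linarith) hr)
  constructor
  · intro h1 h2
    have hgx : 0 < fmap ρ xminus - xminus := by
      rw [hval ρ, ← hsdef]
      have : 0 < (783 + 33 * s) / 864 := by positivity
      nlinarith
    constructor
    · filter_upwards [hIoo.filter_mono nhdsWithin_le_nhds, self_mem_nhdsWithin] with y hy hne
      have hne' : y ≠ xminus := hne
      have hkey := key ρ y
      rw [← hsdef] at hkey
      have hpos : 0 < 8 * (1 - ρ) * (y - xminus) ^ 2 * ((9 + 2 * s) / 24 - y) := by
        have h1' : 0 < (y - xminus) ^ 2 := by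
          have : y - xminus ≠ 0 := sub_ne_zero.mpr hne'
          positivity
        have h2' : 0 < (9 + 2 * s) / 24 - y := by linarith [hy.2]
        exact mul_pos (mul_pos (by linarith) h1') h2'
      unfold Jsq
      nlinarith [hgx, hpos, hkey]
    · unfold Jsq
      nlinarith [hgx]
  · intro h1 h2
    have hgx : fmap ρ xminus - xminus < 0 := by
      rw [hval ρ, ← hsdef]
      have : 0 < (783 + 33 * s) / 864 := by positivity
      nlinarith
    have hcont : ContinuousAt (fun y => fmap ρ y - y) xminus := by
      unfold fmap; fun_prop
    have hneg : ∀ᶠ y in nhds xminus, fmap ρ y - y < 0 :=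
      hcont.eventually_lt_const hgx
    filter_upwards [hIoo.filter_mono nhdsWithin_le_nhds,
      hneg.filter_mono nhdsWithin_le_nhds, self_mem_nhdsWithin] with y hy hyneg hne
    have hne' : y ≠ xminus := hne
    have hkey := key ρ y
    rw [← hsdef] at hkey
    have hpos : 0 < 8 * (1 - ρ) * (y - xminus) ^ 2 * ((9 + 2 * s) / 24 - y) := by
      have h1' : 0 < (y - xminus) ^ 2 := by
        have : y - xminus ≠ 0 := sub_ne_zero.mpr hne'
        positivity
      have h2' : 0 < (9 + 2 * s) / 24 - y := by linarith [hy.2]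
      have hρ1 : ρ < 1 := by
        have : ρstar < 1 := by
          unfold ρstar; rw [← hsdef]
          nlinarith
        linarith
      exact mul_pos (mul_pos (by linarith) h1') h2'
    unfold Jsq
    nlinarith [hgx, hpos, hkey, hyneg]
end

section
/- For every ρ with ρ* < ρ < 1, the cubic polynomial P(z) := f_ρ(z) − z, regarded as a polynomial over ℂ, has exactly one real root, and its remaining two roots are a pair of non-real complex-conjugate numbers (they have nonzero imaginary part and are complex conjugates of each other). -/
/-- For `ρ* < ρ < 1`, the cubic `f_ρ(z) - z`, regarded over `ℂ`, has exactly one real root, and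
its remaining two roots form a pair of non-real complex-conjugate numbers. -/
theorem stmt_11 (ρ : ℝ) (h0 : ρstar < ρ) (h1 : ρ < 1) :
    ∃ (a : ℝ) (w : ℂ), w.im ≠ 0 ∧
      ({v : ℂ | ((ρ : ℂ) - 1) * (8 * v ^ 3 - 9 * v ^ 2) + 2 * (ρ : ℂ) * v - v + (ρ : ℂ) = v} =
        {(a : ℂ), w, (starRingEnd ℂ) w}) ∧
      (∀ b : ℝ, fmap ρ b = b → b = a) := by
  have hρ1 : (0:ℝ) < 1 - ρ := by linarith
  set s : ℝ := Real.sqrt 33 with hs_def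
  have hs2 : s ^ 2 = 33 := Real.sq_sqrt (by norm_num)
  have hs0 : 0 < s := Real.sqrt_pos.mpr (by norm_num)
  have hs6 : s < 6 := by nlinarith
  have h0' : (33 * s - 115) / 668 < ρ := h0
  set c : ℝ := ρ / (1 - ρ) with hc_def
  have hcρ : c * (1 - ρ) = ρ := div_mul_cancel₀ ρ hρ1.ne'
  -- c > critical value (11 s - 27)/288
  have hc : (11 * s - 27) / 288 < c := by
    rw [hc_def, div_lt_div_iff₀ (by norm_num) hρ1]
    nlinarith [mul_pos (by nlinarith : (0:ℝ) < 261 + 11 * s)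
      (by nlinarith : (0:ℝ) < ρ - (33 * s - 115) / 668)]
  -- the real root via IVT
  set t : ℝ := (9 + 2 * s) / 24 with ht_def
  have hgt : 8 * t ^ 3 - 9 * t ^ 2 + 2 * t = (11 * s - 27) / 288 := by
    rw [ht_def]; linear_combination (s / 216) * hs2
  set M : ℝ := max 2 c with hM_def
  have hM2 : (2:ℝ) ≤ M := le_max_left _ _
  have hMc : c ≤ M := le_max_right _ _
  have htM : t ≤ M := by rw [ht_def]; nlinarith
  have hcont : ContinuousOn (fun x : ℝ => 8 * x ^ 3 - 9 * x ^ 2 + 2 * x) (Set.Icc t M) := by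
    fun_prop
  have hivt := intermediate_value_Icc htM hcont
  have hmem : c ∈ Set.Icc (8 * t ^ 3 - 9 * t ^ 2 + 2 * t) (8 * M ^ 3 - 9 * M ^ 2 + 2 * M) := by
    constructor
    · rw [hgt]; linarith
    · nlinarith
  obtain ⟨a, haI, ha'⟩ := hivt hmem
  have ha : 8 * a ^ 3 - 9 * a ^ 2 + 2 * a = c := ha'
  have hat : t < a := by
    rcases lt_or_eq_of_le haI.1 with h | h
    · exact h
    · exfalso; rw [← h] at ha; rw [hgt] at ha; linarith
  -- discriminant positive (i.e. quadratic factor has negative discriminant)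
  have hD : 0 < 192 * a ^ 2 - 144 * a - 17 := by
    have h1' : 0 < a - (9 + 2 * s) / 24 := by rw [ht_def] at hat; linarith
    have h2' : 0 < a - (9 - 2 * s) / 24 := by nlinarith
    nlinarith [mul_pos h1' h2']
  set e : ℝ := Real.sqrt (192 * a ^ 2 - 144 * a - 17) with he_def
  have he2 : e ^ 2 = 192 * a ^ 2 - 144 * a - 17 := Real.sq_sqrt hD.le
  have he0 : 0 < e := Real.sqrt_pos.mpr hD
  -- the complex root
  refine ⟨a, (((9 - 8 * a) / 16 : ℝ) : ℂ) + ((e / 16 : ℝ) : ℂ) * Complex.I, ?_, ?_, ?_⟩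
  · have him : ((((9 - 8 * a) / 16 : ℝ) : ℂ) + ((e / 16 : ℝ) : ℂ) * Complex.I).im = e / 16 := by
      simp
    rw [him]
    positivity
  · -- set equality
    have hca : (ρ - 1) * (8 * a ^ 3 - 9 * a ^ 2 + 2 * a) + ρ = 0 := by
      rw [ha]; linear_combination -hcρ
    have hcaC : ((ρ:ℂ) - 1) * (8 * (a:ℂ) ^ 3 - 9 * (a:ℂ) ^ 2 + 2 * (a:ℂ)) + (ρ:ℂ) = 0 := by
      exact_mod_cast congrArg (Complex.ofReal) hca
    have heC : ((e:ℂ)) ^ 2 = 192 * (a:ℂ) ^ 2 - 144 * (a:ℂ) - 17 := by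
      exact_mod_cast congrArg (Complex.ofReal) he2
    have hconj : (starRingEnd ℂ) ((((9 - 8 * a) / 16 : ℝ) : ℂ) + ((e / 16 : ℝ) : ℂ) * Complex.I)
        = (((9 - 8 * a) / 16 : ℝ) : ℂ) - ((e / 16 : ℝ) : ℂ) * Complex.I := by
      rw [map_add, map_mul, Complex.conj_ofReal, Complex.conj_ofReal, Complex.conj_I]; ring
    have key : ∀ v : ℂ, ((ρ : ℂ) - 1) * (8 * v ^ 3 - 9 * v ^ 2) + 2 * (ρ : ℂ) * v - v + (ρ : ℂ) - v
        = ((ρ:ℂ) - 1) * 8 * (v - (a:ℂ)) *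
          (v - ((((9 - 8 * a) / 16 : ℝ) : ℂ) + ((e / 16 : ℝ) : ℂ) * Complex.I)) *
          (v - ((((9 - 8 * a) / 16 : ℝ) : ℂ) - ((e / 16 : ℝ) : ℂ) * Complex.I)) := by
      intro v
      push_cast
      linear_combination (((ρ:ℂ) - 1) * (v - (a:ℂ)) * (e:ℂ) ^ 2 / 32) * Complex.I_sq
        - (((ρ:ℂ) - 1) * (v - (a:ℂ)) / 32) * heC + hcaC
    ext v
    simp only [Set.mem_setOf_eq, Set.mem_insert_iff, Set.mem_singleton_iff, hconj]
    constructor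
    · intro hv
      have h8 : ((ρ:ℂ) - 1) * 8 ≠ 0 := by
        simp only [mul_ne_zero_iff]
        constructor
        · intro h; apply_fun Complex.re at h; simp at h; linarith
        · norm_num
      have hz : ((ρ:ℂ) - 1) * 8 * (v - (a:ℂ)) *
          (v - ((((9 - 8 * a) / 16 : ℝ) : ℂ) + ((e / 16 : ℝ) : ℂ) * Complex.I)) *
          (v - ((((9 - 8 * a) / 16 : ℝ) : ℂ) - ((e / 16 : ℝ) : ℂ) * Complex.I)) = 0 := by
        rw [← key v]; rw [hv]; ring
      rcases mul_eq_zero.mp hz with h | h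
      · rcases mul_eq_zero.mp h with h | h
        · rcases mul_eq_zero.mp h with h | h
          · exact absurd h h8
          · left; exact sub_eq_zero.mp h
        · right; left; exact sub_eq_zero.mp h
      · right; right; exact sub_eq_zero.mp h
    · intro hv
      have : ((ρ : ℂ) - 1) * (8 * v ^ 3 - 9 * v ^ 2) + 2 * (ρ : ℂ) * v - v + (ρ : ℂ) - v = 0 := by
        rw [key v]
        rcases hv with h | h | h <;> rw [h] <;> ring
      linear_combination this
  · -- uniqueness of the real root
    intro b hb
    have hca : (ρ - 1) * (8 * a ^ 3 - 9 * a ^ 2 + 2 * a) + ρ = 0 := by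
      rw [ha]; linear_combination -hcρ
    have h2 : (ρ - 1) * (8 * b ^ 3 - 9 * b ^ 2 + 2 * b) + ρ = 0 := by
      have := hb; unfold fmap at this; linear_combination this
    have h3 : (ρ - 1) * ((b - a) * (8 * b ^ 2 + (8 * a - 9) * b + (8 * a ^ 2 - 9 * a + 2))) = 0 := by
      linear_combination h2 - hca
    have hρne : ρ - 1 ≠ 0 := by intro h; linarith
    rcases mul_eq_zero.mp h3 with h | h
    · exact absurd h hρne
    · rcases mul_eq_zero.mp h with h | h
      · linarith [sub_eq_zero.mp h]
      · exfalso; nlinarith [sq_nonneg (16 * b + 8 * a - 9)]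
end

section
/- Let σ, ρ, β ∈ ℝ, T > 0, and let (x, y, z) : ℝ → ℝ³ be twice continuously differentiable and 1-periodic, with residuals r_x, r_y, r_z as defined. Then for every continuously differentiable 1-periodic perturbation (δx, δy, δz) : ℝ → ℝ³ and every δT ∈ ℝ, the Gateaux derivative of the loop cost satisfies: (d/dε)|_{ε=0} J₁²[x+εδx, y+εδy, z+εδz, T+εδT] = ∫₀¹ [(−(1/T)r_x′ + σ r_x − (ρ−z) r_y − y r_z)·δx + (−(1/T)r_y′ − σ r_x + r_y − x r_z)·δy + (−(1/T)r_z′ + x r_y + β r_z)·δz] ds − (δT/T²)·∫₀¹ (x′ r_x + y′ r_y + z′ r_z) ds. (Equivalently, the negative gradient of J₁² is the adjoint descent direction of Eq. (14) of the paper.) -/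
/-!
The cost is differentiated under the integral sign. For `ε` near `0` the period `T + ε δT` stays
away from `0`, so the `ε`-derivative of the integrand is jointly continuous, hence bounded on a
compact neighbourhood of `{0} × [0, 1]`; this gives the first variation `∫ ⟨r, δr⟩`, where `δr` is
the linearised residual. The terms `(1/T) r · δ′` are then traded for `-(1/T) r′ · δ`: the
difference is the derivative of the `1`-periodic function `r · δ`, whose integral over a period
vanishes. What remains is the adjoint expression.
-/

open MeasureTheory Set
open scoped Interval Topology

theorem hasDerivAt_intervalIntegral_of_continuousOn_deriv {E : Type*} [NormedAddCommGroup E]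
    [NormedSpace ℝ E] {F F' : ℝ → ℝ → E} {U : Set ℝ} {ε₀ a b : ℝ} (hU : U ∈ 𝓝 ε₀)
    (hF : ∀ ε ∈ U, ContinuousOn (F ε) [[a, b]])
    (hF' : ∀ ε ∈ U, ∀ s ∈ [[a, b]], HasDerivAt (F · s) (F' ε s) ε)
    (hF'c : ContinuousOn (fun p : ℝ × ℝ => F' p.1 p.2) (U ×ˢ [[a, b]])) :
    HasDerivAt (fun ε => ∫ s in a..b, F ε s) (∫ s in a..b, F' ε₀ s) ε₀ := by
  obtain ⟨r, hr, hrU⟩ := Metric.nhds_basis_closedBall.mem_iff.1 hU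
  obtain ⟨C, hC⟩ := ((isCompact_closedBall ε₀ r).prod isCompact_uIcc).exists_bound_of_continuousOn
    (hF'c.mono (prod_mono hrU subset_rfl))
  have hF'₀ : ContinuousOn (F' ε₀) [[a, b]] :=
    hF'c.comp (continuousOn_const.prodMk continuousOn_id) fun s hs => ⟨mem_of_mem_nhds hU, hs⟩
  refine (intervalIntegral.hasDerivAt_integral_of_dominated_loc_of_deriv_le (bound := fun _ => C)
    (Metric.closedBall_mem_nhds ε₀ hr) ?_ (hF ε₀ (mem_of_mem_nhds hU)).intervalIntegrable
    ((hF'₀.mono uIoc_subset_uIcc).aestronglyMeasurable measurableSet_uIoc)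
    (ae_of_all _ fun s hs ε hε => hC (ε, s) ⟨hε, uIoc_subset_uIcc hs⟩) intervalIntegrable_const
    (ae_of_all _ fun s hs ε hε => hF' ε (hrU hε) s (uIoc_subset_uIcc hs))).2
  filter_upwards [hU] with ε hε
  exact ((hF ε hε).mono uIoc_subset_uIcc).aestronglyMeasurable measurableSet_uIoc

theorem Function.Periodic.deriv {𝕜 F : Type*} [NontriviallyNormedField 𝕜] [NormedAddCommGroup F]
    [NormedSpace 𝕜 F] {f : 𝕜 → F} {c : 𝕜} (h : f.Periodic c) : (deriv f).Periodic c :=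
  fun s => by rw [← deriv_comp_add_const, h.funext]

theorem Function.Periodic.intervalIntegral_eq_zero_of_hasDerivAt {E : Type*}
    [NormedAddCommGroup E] [NormedSpace ℝ E] [CompleteSpace E] {f f' : ℝ → E} {a c : ℝ}
    (h : f.Periodic c) (hf : ∀ s, HasDerivAt f (f' s) s)
    (hint : IntervalIntegrable f' volume a (a + c)) : ∫ s in a..a + c, f' s = 0 := by
  rw [intervalIntegral.integral_eq_sub_of_hasDerivAt (fun s _ => hf s) hint, h a, sub_self]

theorem deriv_add_const_mul {𝕜 : Type*} [NontriviallyNormedField 𝕜] {f g : 𝕜 → 𝕜}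
    (hf : Differentiable 𝕜 f) (hg : Differentiable 𝕜 g) (c : 𝕜) :
    deriv (fun s => f s + c * g s) = fun s => deriv f s + c * deriv g s :=
  funext fun s => ((hf s).hasDerivAt.add ((hg s).hasDerivAt.const_mul c)).deriv

namespace Lorenz

noncomputable def residualX (σ T : ℝ) (x y : ℝ → ℝ) (s : ℝ) : ℝ :=
  1 / T * deriv x s - σ * (y s - x s)

noncomputable def residualY (ρ T : ℝ) (x y z : ℝ → ℝ) (s : ℝ) : ℝ :=
  1 / T * deriv y s - x s * (ρ - z s) + y s

noncomputable def residualZ (β T : ℝ) (x y z : ℝ → ℝ) (s : ℝ) : ℝ :=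
  1 / T * deriv z s - x s * y s + β * z s

noncomputable def loopCost (σ ρ β T : ℝ) (x y z : ℝ → ℝ) : ℝ :=
  1 / 2 * ∫ s in (0 : ℝ)..1,
    residualX σ T x y s ^ 2 + residualY ρ T x y z s ^ 2 + residualZ β T x y z s ^ 2

theorem hasDerivAt_loopCost {σ ρ β T : ℝ} (δT : ℝ) (hT : T ≠ 0) {x y z δx δy δz : ℝ → ℝ}
    (hx : ContDiff ℝ 1 x) (hy : ContDiff ℝ 1 y) (hz : ContDiff ℝ 1 z)
    (hδx : ContDiff ℝ 1 δx) (hδy : ContDiff ℝ 1 δy) (hδz : ContDiff ℝ 1 δz) :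
    HasDerivAt (fun ε => loopCost σ ρ β (T + ε * δT) (fun s => x s + ε * δx s)
        (fun s => y s + ε * δy s) (fun s => z s + ε * δz s))
      (∫ s in (0 : ℝ)..1,
        residualX σ T x y s * (deriv δx s / T - δT / T ^ 2 * deriv x s - σ * (δy s - δx s))
        + residualY ρ T x y z s * (deriv δy s / T - δT / T ^ 2 * deriv y s
            - (δx s * (ρ - z s) - x s * δz s) + δy s)
        + residualZ β T x y z s * (deriv δz s / T - δT / T ^ 2 * deriv z s
            - (δx s * y s + x s * δy s) + β * δz s)) 0 := by
  have hline (a b ε : ℝ) : HasDerivAt (fun e => a + e * b) b ε :=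
    (hasDerivAt_mul_const b).const_add a
  set U := {ε : ℝ | T + ε * δT ≠ 0}
  have hU : U ∈ 𝓝 0 :=
    (isOpen_ne_fun (by fun_prop) continuous_const).mem_nhds (by simpa [U] using hT)
  have hinv : ∀ ε ∈ U, HasDerivAt (fun e => 1 / (T + e * δT)) (-δT / (T + ε * δT) ^ 2) ε :=
    fun ε hε => ((hasDerivAt_const ε 1).div (hline T δT ε) hε).congr_deriv (by ring)
  have := hx.continuous; have := hy.continuous; have := hz.continuous
  have := hδx.continuous; have := hδy.continuous; have := hδz.continuous
  have := hx.continuous_deriv le_rfl; have := hy.continuous_deriv le_rfl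
  have := hz.continuous_deriv le_rfl; have := hδx.continuous_deriv le_rfl
  have := hδy.continuous_deriv le_rfl; have := hδz.continuous_deriv le_rfl
  simp only [loopCost, residualX, residualY, residualZ,
    deriv_add_const_mul (hx.differentiable one_ne_zero) (hδx.differentiable one_ne_zero),
    deriv_add_const_mul (hy.differentiable one_ne_zero) (hδy.differentiable one_ne_zero),
    deriv_add_const_mul (hz.differentiable one_ne_zero) (hδz.differentiable one_ne_zero)]
  -- `?F'` is not written out: it is assigned by the derivative term built in `hderiv`.
  refine (HasDerivAt.const_mul (1 / 2) (hasDerivAt_intervalIntegral_of_continuousOn_deriv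
    (F' := ?F') hU ?hF ?hderiv ?hcont)).congr_deriv ?hval
  case hF => exact fun ε _ => Continuous.continuousOn (by fun_prop)
  case hderiv =>
    intro ε hε s _
    exact ((((hinv ε hε).mul (hline _ _ ε)).sub
        (((hline _ _ ε).sub (hline _ _ ε)).const_mul σ)).pow 2).add
      ((((hinv ε hε).mul (hline _ _ ε)).sub ((hline _ _ ε).mul
        ((hasDerivAt_const ε ρ).sub (hline _ _ ε)))).add (hline _ _ ε) |>.pow 2) |>.add
      ((((hinv ε hε).mul (hline _ _ ε)).sub ((hline _ _ ε).mul (hline _ _ ε))).add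
        ((hline _ _ ε).const_mul β) |>.pow 2)
  case hcont =>
    refine fun p hp => ContinuousAt.continuousWithinAt ?_
    have hp : T + p.1 * δT ≠ 0 := hp.1
    simp only [Pi.mul_apply, Pi.sub_apply, Pi.add_apply]
    fun_prop (disch := first | exact hp | exact pow_ne_zero 2 hp)
  case hval =>
    rw [← intervalIntegral.integral_const_mul]
    refine intervalIntegral.integral_congr fun s _ => ?_
    simp only [Pi.mul_apply, Pi.sub_apply, Pi.add_apply, zero_mul, add_zero,
      Nat.reduceSub, pow_one, Nat.cast_ofNat]
    ring

theorem integral_residual_mul_variation_eq {σ ρ β T : ℝ} (δT : ℝ) {x y z δx δy δz : ℝ → ℝ}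
    (hx : ContDiff ℝ 2 x) (hy : ContDiff ℝ 2 y) (hz : ContDiff ℝ 2 z)
    (hδx : ContDiff ℝ 1 δx) (hδy : ContDiff ℝ 1 δy) (hδz : ContDiff ℝ 1 δz)
    (hpx : x.Periodic 1) (hpy : y.Periodic 1) (hpz : z.Periodic 1)
    (hpδx : δx.Periodic 1) (hpδy : δy.Periodic 1) (hpδz : δz.Periodic 1) :
    (∫ s in (0 : ℝ)..1,
        residualX σ T x y s * (deriv δx s / T - δT / T ^ 2 * deriv x s - σ * (δy s - δx s))
        + residualY ρ T x y z s * (deriv δy s / T - δT / T ^ 2 * deriv y s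
            - (δx s * (ρ - z s) - x s * δz s) + δy s)
        + residualZ β T x y z s * (deriv δz s / T - δT / T ^ 2 * deriv z s
            - (δx s * y s + x s * δy s) + β * δz s))
      = (∫ s in (0 : ℝ)..1,
          ((-(1 / T) * deriv (residualX σ T x y) s + σ * residualX σ T x y s
              - (ρ - z s) * residualY ρ T x y z s - y s * residualZ β T x y z s) * δx s
            + (-(1 / T) * deriv (residualY ρ T x y z) s - σ * residualX σ T x y s
              + residualY ρ T x y z s - x s * residualZ β T x y z s) * δy s
            + (-(1 / T) * deriv (residualZ β T x y z) s + x s * residualY ρ T x y z s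
              + β * residualZ β T x y z s) * δz s))
        - δT / T ^ 2 * ∫ s in (0 : ℝ)..1, (deriv x s * residualX σ T x y s
            + deriv y s * residualY ρ T x y z s + deriv z s * residualZ β T x y z s) := by
  have hx' : ContDiff ℝ 1 (deriv x) := hx.deriv'
  have hy' : ContDiff ℝ 1 (deriv y) := hy.deriv'
  have hz' : ContDiff ℝ 1 (deriv z) := hz.deriv'
  have := hx.of_le one_le_two; have := hy.of_le one_le_two; have := hz.of_le one_le_two
  have hrX : ContDiff ℝ 1 (residualX σ T x y) := by unfold residualX; fun_prop
  have hrY : ContDiff ℝ 1 (residualY ρ T x y z) := by unfold residualY; fun_prop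
  have hrZ : ContDiff ℝ 1 (residualZ β T x y z) := by unfold residualZ; fun_prop
  have hpX : (residualX σ T x y).Periodic 1 := fun s => by
    simp only [residualX, hpx s, hpy s, hpx.deriv s]
  have hpY : (residualY ρ T x y z).Periodic 1 := fun s => by
    simp only [residualY, hpx s, hpy s, hpz s, hpy.deriv s]
  have hpZ : (residualZ β T x y z).Periodic 1 := fun s => by
    simp only [residualZ, hpx s, hpy s, hpz s, hpz.deriv s]
  have hdiff {f : ℝ → ℝ} (hf : ContDiff ℝ 1 f) (s : ℝ) : HasDerivAt f (deriv f s) s :=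
    (hf.differentiable one_ne_zero s).hasDerivAt
  have := hrX.continuous_deriv le_rfl; have := hrY.continuous_deriv le_rfl
  have := hrZ.continuous_deriv le_rfl; have := hδx.continuous_deriv le_rfl
  have := hδy.continuous_deriv le_rfl; have := hδz.continuous_deriv le_rfl
  have hboundary : ∫ s in (0 : ℝ)..1,
      deriv (residualX σ T x y) s * δx s + residualX σ T x y s * deriv δx s
      + (deriv (residualY ρ T x y z) s * δy s + residualY ρ T x y z s * deriv δy s)
      + (deriv (residualZ β T x y z) s * δz s + residualZ β T x y z s * deriv δz s) = 0 := by
    simpa only [zero_add] using Function.Periodic.intervalIntegral_eq_zero_of_hasDerivAt (a := 0)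
        (((hpX.mul hpδx).add (hpY.mul hpδy)).add (hpZ.mul hpδz))
        (fun s => (((hdiff hrX s).mul (hdiff hδx s)).add
          ((hdiff hrY s).mul (hdiff hδy s))).add ((hdiff hrZ s).mul (hdiff hδz s)))
        (Continuous.intervalIntegrable (by fun_prop) _ _)
  rw [← sub_eq_zero, ← intervalIntegral.integral_const_mul, ← intervalIntegral.integral_sub,
    ← intervalIntegral.integral_sub]
  · refine (intervalIntegral.integral_congr fun s _ => ?_).trans
      ((intervalIntegral.integral_const_mul (1 / T) _).trans (by rw [hboundary, mul_zero]))
    ring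
  all_goals exact Continuous.intervalIntegrable (by fun_prop) _ _

end Lorenz

/-- Gateaux derivative of the Lorenz loop cost `J₁²`: for a twice continuously differentiable
1-periodic loop `(x, y, z)` with period `T > 0`, residuals `r_x, r_y, r_z`, and any continuously
differentiable 1-periodic perturbation `(δx, δy, δz)` together with `δT ∈ ℝ`, the derivative of
`ε ↦ J₁²[x + εδx, y + εδy, z + εδz, T + εδT]` at `ε = 0` is given by the adjoint expression of
Eq. (14) of the paper. -/
theorem stmt_14 (σ ρ β T : ℝ) (hT : 0 < T)
    (x y z : ℝ → ℝ)
    (hx : ContDiff ℝ 2 x) (hy : ContDiff ℝ 2 y) (hz : ContDiff ℝ 2 z)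
    (hpx : Function.Periodic x 1) (hpy : Function.Periodic y 1) (hpz : Function.Periodic z 1)
    (δx δy δz : ℝ → ℝ)
    (hδx : ContDiff ℝ 1 δx) (hδy : ContDiff ℝ 1 δy) (hδz : ContDiff ℝ 1 δz)
    (hpδx : Function.Periodic δx 1) (hpδy : Function.Periodic δy 1)
    (hpδz : Function.Periodic δz 1)
    (δT : ℝ)
    (rx ry rz : ℝ → ℝ)
    (hrx : ∀ s : ℝ, rx s = (1 / T) * deriv x s - σ * (y s - x s))
    (hry : ∀ s : ℝ, ry s = (1 / T) * deriv y s - x s * (ρ - z s) + y s)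
    (hrz : ∀ s : ℝ, rz s = (1 / T) * deriv z s - x s * y s + β * z s) :
    HasDerivAt
      (fun ε : ℝ =>
        ((1 : ℝ) / 2) * ∫ s in (0 : ℝ)..1,
          (((1 / (T + ε * δT)) * deriv (fun s' => x s' + ε * δx s') s
              - σ * ((y s + ε * δy s) - (x s + ε * δx s))) ^ 2
            + ((1 / (T + ε * δT)) * deriv (fun s' => y s' + ε * δy s') s
              - (x s + ε * δx s) * (ρ - (z s + ε * δz s)) + (y s + ε * δy s)) ^ 2
            + ((1 / (T + ε * δT)) * deriv (fun s' => z s' + ε * δz s') s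
              - (x s + ε * δx s) * (y s + ε * δy s) + β * (z s + ε * δz s)) ^ 2))
      ((∫ s in (0 : ℝ)..1,
          ((-(1 / T) * deriv rx s + σ * rx s - (ρ - z s) * ry s - y s * rz s) * δx s
            + (-(1 / T) * deriv ry s - σ * rx s + ry s - x s * rz s) * δy s
            + (-(1 / T) * deriv rz s + x s * ry s + β * rz s) * δz s))
        - (δT / T ^ 2) *
          ∫ s in (0 : ℝ)..1, (deriv x s * rx s + deriv y s * ry s + deriv z s * rz s))
      0 := by
  obtain rfl : rx = Lorenz.residualX σ T x y := funext hrx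
  obtain rfl : ry = Lorenz.residualY ρ T x y z := funext hry
  obtain rfl : rz = Lorenz.residualZ β T x y z := funext hrz
  exact (Lorenz.hasDerivAt_loopCost δT hT.ne' (hx.of_le one_le_two) (hy.of_le one_le_two)
    (hz.of_le one_le_two) hδx hδy hδz).congr_deriv
    (Lorenz.integral_residual_mul_variation_eq δT hx hy hz hδx hδy hδz hpx hpy hpz hpδx hpδy hpδz)
end
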